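/- arXiv:1701.03858 — 5 statements merged into one kernel-verified Lean document; each statement's English description precedes it below -/
import Mathlib

section
/- The function d_X is a metric on X = (0,1] × ℝ. That is, d_X is nonnegative, vanishes exactly on the diagonal, is symmetric, and satisfies the triangle inequality. -/
noncomputable def dXaux (x x' : ℝ × ℝ) : ℝ :=
  if x.1 - x'.1 ≤ x.1 / 2 ∧ |x.2 - x'.2| ≤ x.1 / 2 then
    max (x.1 - x'.1) |x.2 - x'.2|
  else x.1 / 2

/-- The explicit semialgebraic metric on `X = (0,1] × ℝ` from the proof of Theorem 2. -/
noncomputable def dX (x x' : ℝ × ℝ) : ℝ :=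
  if x'.1 ≤ x.1 then dXaux x x' else dXaux x' x

def memX (x : ℝ × ℝ) : Prop := 0 < x.1 ∧ x.1 ≤ 1

/-- The "untruncated" condition, in symmetric form. -/
def goodX (x y : ℝ × ℝ) : Prop :=
  |x.1 - y.1| ≤ max x.1 y.1 / 2 ∧ |x.2 - y.2| ≤ max x.1 y.1 / 2

noncomputable instance (x y : ℝ × ℝ) : Decidable (goodX x y) :=
  Classical.propDecidable _

/-- A symmetric rewriting of `dX`. -/
noncomputable def dX' (x y : ℝ × ℝ) : ℝ :=
  if goodX x y then max |x.1 - y.1| |x.2 - y.2| else max x.1 y.1 / 2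

lemma goodX_symm {x y : ℝ × ℝ} (h : goodX x y) : goodX y x := by
  obtain ⟨h1, h2⟩ := h
  constructor
  · rwa [abs_sub_comm, max_comm]
  · rwa [abs_sub_comm, max_comm]

lemma dX_eq_dX' (x y : ℝ × ℝ) : dX x y = dX' x y := by
  unfold dX dXaux dX' goodX
  rcases le_or_gt y.1 x.1 with h | h
  · rw [if_pos h]
    have h1 : |x.1 - y.1| = x.1 - y.1 := abs_of_nonneg (by linarith)
    have h2 : max x.1 y.1 = x.1 := max_eq_left h
    simp only [h1, h2]
  · rw [if_neg (not_le.mpr h)]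
    have h1 : |x.1 - y.1| = y.1 - x.1 := by
      rw [abs_sub_comm]; exact abs_of_nonneg (by linarith)
    have h2 : max x.1 y.1 = y.1 := max_eq_right h.le
    simp only [h1, h2, abs_sub_comm x.2 y.2]

lemma dX'_symm (x y : ℝ × ℝ) : dX' x y = dX' y x := by
  unfold dX' goodX
  simp only [abs_sub_comm x.1 y.1, abs_sub_comm x.2 y.2, max_comm x.1 y.1]
  congr 1

lemma dX'_le_half (x y : ℝ × ℝ) : dX' x y ≤ max x.1 y.1 / 2 := by
  unfold dX'
  split_ifs with h
  · exact max_le h.1 h.2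
  · exact le_refl (max x.1 y.1 / 2)

lemma dX'_nonneg (x y : ℝ × ℝ) (h : 0 ≤ max x.1 y.1) : 0 ≤ dX' x y := by
  unfold dX'
  split_ifs with hg
  · exact le_trans (abs_nonneg _) (le_max_left _ _)
  · linarith

lemma dX'_lower (x y : ℝ × ℝ) : min |x.1 - y.1| (max x.1 y.1 / 2) ≤ dX' x y := by
  unfold dX'
  split_ifs with hg
  · exact le_trans (min_le_left _ _) (le_max_left _ _)
  · exact min_le_right _ _

lemma dX'_ge1 {x y : ℝ × ℝ} (h : goodX x y) : |x.1 - y.1| ≤ dX' x y := by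
  unfold dX'; rw [if_pos h]; exact le_max_left _ _

lemma dX'_ge2 {x y : ℝ × ℝ} (h : goodX x y) : |x.2 - y.2| ≤ dX' x y := by
  unfold dX'; rw [if_pos h]; exact le_max_right _ _

lemma dX'_eq_zero {x y : ℝ × ℝ} (hx : 0 < x.1) (hy : 0 < y.1) :
    dX' x y = 0 ↔ x = y := by
  have hmax : 0 < max x.1 y.1 := lt_max_of_lt_left hx
  unfold dX'
  split_ifs with hg
  · constructor
    · intro h0
      have h1 : |x.1 - y.1| ≤ 0 := h0 ▸ le_max_left _ _
      have h2 : |x.2 - y.2| ≤ 0 := h0 ▸ le_max_right _ _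
      have e1 : x.1 = y.1 := by
        have := abs_nonneg (x.1 - y.1)
        have : |x.1 - y.1| = 0 := le_antisymm h1 this
        have := abs_eq_zero.mp this; linarith
      have e2 : x.2 = y.2 := by
        have := abs_nonneg (x.2 - y.2)
        have : |x.2 - y.2| = 0 := le_antisymm h2 this
        have := abs_eq_zero.mp this; linarith
      exact Prod.ext e1 e2
    · intro h; subst h; simp
  · constructor
    · intro h0; linarith
    · intro h; subst h
      exfalso
      apply hg
      constructor
      · simp; linarith
      · simp; linarith

/-- Triangle inequality, auxiliary case: the pair `(a, b)` is truncated. -/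
lemma dX'_tri_aux {a b c : ℝ × ℝ} (_ha : 0 < a.1) (hb : 0 < b.1) (_hc : 0 < c.1)
    (hbad : ¬ goodX a b) : dX' a c ≤ dX' a b + dX' b c := by
  have hab : dX' a b = max a.1 b.1 / 2 := by unfold dX'; rw [if_neg hbad]
  have hac : dX' a c ≤ max a.1 c.1 / 2 := dX'_le_half a c
  have hbc0 : 0 ≤ dX' b c := dX'_nonneg b c (by positivity)
  rcases le_or_gt c.1 (max a.1 b.1) with h | h
  · have : max a.1 c.1 ≤ max a.1 b.1 := max_le (le_max_left _ _) h
    linarith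
  · have hca : a.1 < c.1 := lt_of_le_of_lt (le_max_left _ _) h
    have hcb : b.1 < c.1 := lt_of_le_of_lt (le_max_right _ _) h
    have hmaxac : max a.1 c.1 = c.1 := max_eq_right hca.le
    have hmaxbc : max b.1 c.1 = c.1 := max_eq_right hcb.le
    have habs : |b.1 - c.1| = c.1 - b.1 := by
      rw [abs_sub_comm]; exact abs_of_nonneg (by linarith)
    have hlow := dX'_lower b c
    rw [habs, hmaxbc] at hlow
    have hmab : b.1 / 2 ≤ max a.1 b.1 / 2 := by
      have := le_max_right a.1 b.1; linarith
    rcases min_cases (c.1 - b.1) (c.1 / 2) with ⟨heq, _⟩ | ⟨heq, _⟩ <;>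
      rw [heq] at hlow <;> rw [hmaxac] at hac <;> linarith

lemma dX'_triangle {a b c : ℝ × ℝ} (ha : 0 < a.1) (hb : 0 < b.1) (hc : 0 < c.1) :
    dX' a c ≤ dX' a b + dX' b c := by
  by_cases Gab : goodX a b
  · by_cases Gbc : goodX b c
    · -- both good
      have h1ab := dX'_ge1 Gab
      have h2ab := dX'_ge2 Gab
      have h1bc := dX'_ge1 Gbc
      have h2bc := dX'_ge2 Gbc
      have t1 : |a.1 - c.1| ≤ dX' a b + dX' b c := by
        calc |a.1 - c.1| ≤ |a.1 - b.1| + |b.1 - c.1| := abs_sub_le _ _ _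
        _ ≤ dX' a b + dX' b c := add_le_add h1ab h1bc
      have t2 : |a.2 - c.2| ≤ dX' a b + dX' b c := by
        calc |a.2 - c.2| ≤ |a.2 - b.2| + |b.2 - c.2| := abs_sub_le _ _ _
        _ ≤ dX' a b + dX' b c := add_le_add h2ab h2bc
      by_cases Gac : goodX a c
      · unfold dX'; rw [if_pos Gac]; exact max_le t1 t2
      · have hval : dX' a c = max a.1 c.1 / 2 := by unfold dX'; rw [if_neg Gac]
        rw [hval]
        unfold goodX at Gac
        push_neg at Gac
        rcases le_or_gt (|a.1 - c.1|) (max a.1 c.1 / 2) with h | h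
        · have := Gac h; linarith
        · linarith
    · -- (b,c) bad; use symmetry
      have hbad : ¬ goodX c b := fun h => Gbc (goodX_symm h)
      have := dX'_tri_aux hc hb ha hbad
      rw [dX'_symm a c, dX'_symm a b, dX'_symm b c]
      linarith [dX'_symm c b, dX'_symm b a]
  · exact dX'_tri_aux ha hb hc Gab

theorem dX_is_metric :
    (∀ x x', memX x → memX x' → 0 ≤ dX x x') ∧
    (∀ x x', memX x → memX x' → (dX x x' = 0 ↔ x = x')) ∧
    (∀ x x', memX x → memX x' → dX x x' = dX x' x) ∧
    (∀ x x' x'', memX x → memX x' → memX x'' →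
      dX x x'' ≤ dX x x' + dX x' x'') := by
  refine ⟨?_, ?_, ?_, ?_⟩
  · intro x x' hx hx'
    rw [dX_eq_dX']
    exact dX'_nonneg x x' (le_trans hx.1.le (le_max_left _ _))
  · intro x x' hx hx'
    rw [dX_eq_dX']
    exact dX'_eq_zero hx.1 hx'.1
  · intro x x' _ _
    rw [dX_eq_dX', dX_eq_dX', dX'_symm]
  · intro x x' x'' hx hx' hx''
    rw [dX_eq_dX', dX_eq_dX', dX_eq_dX']
    exact dX'_triangle hx.1 hx'.1 hx''.1
end

section
/- If x = (x₁,x₂) and x' = (x₁',x₂') are points of X = (0,1] × ℝ with x₁ ≤ x₁'/2, then d_X(x,x') = x₁'/2. Consequently, for each fixed x' ∈ X, d_X(x, x') tends to x₁'/2 as x₁ → 0, uniformly in x₂. -/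
lemma dX_eq_half (x x' : ℝ × ℝ) (hx : memX x) (hx' : memX x')
    (h : x.1 ≤ x'.1 / 2) : dX x x' = x'.1 / 2 := by
  have hlt : x.1 < x'.1 := lt_of_le_of_lt h (by linarith [hx'.1])
  rw [dX, if_neg (not_le.mpr hlt), dXaux]
  split_ifs with hc
  · have h1 : x'.1 / 2 ≤ x'.1 - x.1 := by linarith
    have := hc.1
    have := hc.2
    apply le_antisymm
    · exact max_le (by linarith) (by linarith)
    · exact le_trans h1 (le_max_left _ _)
  · rfl

theorem dX_eq_half_near_zero (x x' : ℝ × ℝ) (hx : memX x) (hx' : memX x')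
    (h : x.1 ≤ x'.1 / 2) :
    dX x x' = x'.1 / 2 ∧
    ∀ ε > (0:ℝ), ∃ δ > (0:ℝ), ∀ y : ℝ × ℝ, memX y → y.1 < δ →
      |dX y x' - x'.1 / 2| < ε := by
  refine ⟨dX_eq_half x x' hx hx' h, fun ε hε => ⟨x'.1 / 2, by linarith [hx'.1], ?_⟩⟩
  intro y hy hyδ
  rw [dX_eq_half y x' hy hx' (le_of_lt hyδ)]
  simpa using hε
end

section
/- The spiral S = { t·exp(πi(1 - 1/t)) : t ∈ (0,1] } ⊆ ℂ intersects the positive real axis { x ∈ ℝ : x > 0 } (viewed inside ℂ) in an infinite set; moreover this intersection is a discrete subset of ℂ accumulating only at 0. -/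
open Complex

/-!
A point t·exp(πi(1 - 1/t)) of the spiral with t > 0 is a positive real exactly when
π(1 - 1/t) ∈ 2πℤ, i.e. when t = 1/(2n+1) with n ∈ ℕ, and the point is then t itself. So the
intersection is the range of the injective sequence 1/(2n+1), which tends to 0. The range of a
sequence converging to a point outside it is discrete, and its closure only adds the limit.
-/

open Filter Set Topology
open scoped Real

theorem Filter.Tendsto.isDiscrete_range {X : Type*} [TopologicalSpace X] [T2Space X] {u : ℕ → X}
    {a : X} (hu : Tendsto u atTop (𝓝 a)) (ha : ∀ n, u n ≠ a) : IsDiscrete (range u) := by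
  rw [isDiscrete_iff_forall_mem_exists_isOpen]
  rintro _ ⟨n, rfl⟩
  obtain ⟨U, V, hU, hV, hnU, haV, hUV⟩ := t2_separation (ha n)
  have hfin : (u ⁻¹' V)ᶜ.Finite := by
    simpa [← Nat.cofinite_eq_atTop] using hu (hV.mem_nhds haV)
  refine ⟨U \ (u '' (u ⁻¹' V)ᶜ \ {u n}), hU.sdiff ((hfin.image u).sdiff).isClosed, ?_⟩
  ext x
  constructor
  · rintro ⟨⟨hxU, hxF⟩, m, rfl⟩
    by_contra hne
    exact hxF ⟨⟨m, fun hmV => hUV.le_bot ⟨hxU, hmV⟩, rfl⟩, hne⟩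
  · rintro rfl
    exact ⟨⟨hnU, fun h => h.2 rfl⟩, n, rfl⟩

theorem Filter.Tendsto.closure_range_subset_insert {X : Type*} [TopologicalSpace X] [T2Space X]
    {u : ℕ → X} {a : X} (hu : Tendsto u atTop (𝓝 a)) : closure (range u) ⊆ insert a (range u) :=
  closure_minimal (subset_insert _ _) hu.isCompact_insert_range.isClosed

theorem sin_eq_zero_and_cos_pos_iff (θ : ℝ) :
    Real.sin θ = 0 ∧ 0 < Real.cos θ ↔ ∃ k : ℤ, θ = k * (2 * π) := by
  rw [exists_congr fun k => eq_comm, ← Real.cos_eq_one_iff]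
  have := Real.sin_sq_add_cos_sq θ
  constructor
  · rintro ⟨hsin, hcos⟩
    nlinarith
  · intro hcos
    exact ⟨by simpa [hcos] using this, hcos ▸ one_pos⟩

theorem im_eq_zero_and_re_pos_ofReal_mul_exp_mul_I_iff {t : ℝ} (ht : 0 < t) (θ : ℝ) :
    ((t : ℂ) * exp (θ * I)).im = 0 ∧ 0 < ((t : ℂ) * exp (θ * I)).re ↔
      ∃ k : ℤ, θ = k * (2 * π) := by
  simp only [re_ofReal_mul, im_ofReal_mul, exp_ofReal_mul_I_re, exp_ofReal_mul_I_im,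
    mul_eq_zero, ht.ne', false_or, mul_pos_iff_of_pos_left ht]
  exact sin_eq_zero_and_cos_pos_iff θ

noncomputable def spiral (t : ℝ) : ℂ := t * exp (π * I * ((1 - 1 / t : ℝ) : ℂ))

theorem spiral_eq_ofReal_mul_exp (t : ℝ) : spiral t = t * exp ((π * (1 - 1 / t) : ℝ) * I) := by
  rw [spiral]
  congr 2
  push_cast
  ring

theorem spiral_inv_two_mul_add_one (n : ℕ) :
    spiral (2 * n + 1)⁻¹ = ((2 * n + 1 : ℝ)⁻¹ : ℝ) := by
  have harg : (π : ℂ) * I * ((1 - 1 / (2 * n + 1 : ℝ)⁻¹ : ℝ) : ℂ) =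
      ((-n : ℤ) : ℂ) * (2 * π * I) := by
    rw [one_div, inv_inv]
    push_cast
    ring
  rw [spiral, harg, exp_int_mul_two_pi_mul_I, mul_one]

theorem exists_nat_eq_inv_of_spiral_mem_posAxis {t : ℝ} (h0 : 0 < t) (h1 : t ≤ 1)
    (h : (spiral t).im = 0 ∧ 0 < (spiral t).re) : ∃ n : ℕ, t = (2 * n + 1 : ℝ)⁻¹ := by
  rw [spiral_eq_ofReal_mul_exp, im_eq_zero_and_re_pos_ofReal_mul_exp_mul_I_iff h0] at h
  obtain ⟨k, hk⟩ := h
  have hinv : 1 / t = 1 - 2 * k := by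
    have := Real.pi_pos
    field_simp at hk ⊢
    linarith
  have hk0 : k ≤ 0 := by
    have : 1 ≤ 1 / t := one_le_one_div h0 h1
    have : (k : ℝ) ≤ 0 := by linarith
    exact_mod_cast this
  obtain ⟨n, hn⟩ := Int.exists_eq_neg_ofNat hk0
  refine ⟨n, ?_⟩
  rw [← inv_inv t, ← one_div t, hinv, hn]
  push_cast
  ring

theorem strictAnti_inv_two_mul_add_one : StrictAnti fun n : ℕ => (2 * n + 1 : ℝ)⁻¹ :=
  fun _ _ h => by simp only; gcongr

theorem tendsto_inv_two_mul_add_one :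
    Tendsto (fun n : ℕ => (((2 * n + 1 : ℝ)⁻¹ : ℝ) : ℂ)) atTop (𝓝 0) := by
  have h : Tendsto (fun n : ℕ => (2 * n + 1 : ℝ)) atTop atTop :=
    tendsto_atTop_add_const_right _ _ (tendsto_natCast_atTop_atTop.const_mul_atTop two_pos)
  rw [← ofReal_zero]
  exact (continuous_ofReal.tendsto 0).comp (tendsto_inv_atTop_zero.comp h)

theorem spiral_inter_posAxis :
    {z : ℂ | ∃ t : ℝ, 0 < t ∧ t ≤ 1 ∧ z = spiral t} ∩ {z | z.im = 0 ∧ 0 < z.re} =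
      range fun n : ℕ => (((2 * n + 1 : ℝ)⁻¹ : ℝ) : ℂ) := by
  ext z
  constructor
  · rintro ⟨⟨t, h0, h1, rfl⟩, hP⟩
    obtain ⟨n, rfl⟩ := exists_nat_eq_inv_of_spiral_mem_posAxis h0 h1 hP
    exact ⟨n, (spiral_inv_two_mul_add_one n).symm⟩
  · rintro ⟨n, rfl⟩
    have hpos : 0 < (2 * n + 1 : ℝ)⁻¹ := by positivity
    refine ⟨⟨_, hpos, inv_le_one_of_one_le₀ (by linarith [n.cast_nonneg (α := ℝ)]),
      (spiral_inv_two_mul_add_one n).symm⟩, ofReal_im _, hpos⟩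

theorem spiral_meets_positive_axis_infinitely :
    let S : Set ℂ := {z | ∃ t : ℝ, 0 < t ∧ t ≤ 1 ∧
      z = (t : ℂ) * Complex.exp (Real.pi * Complex.I * ((1 - 1 / t : ℝ) : ℂ))}
    let P : Set ℂ := {z | z.im = 0 ∧ 0 < z.re}
    (S ∩ P).Infinite ∧
    (∀ z ∈ S ∩ P, ∃ ε > (0:ℝ), ∀ z' ∈ S ∩ P, z' ∈ Metric.ball z ε → z' = z) ∧
    (∀ w : ℂ, w ∈ closure (S ∩ P) → w ∉ S ∩ P → w = 0) := by
  intro S P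
  have hSP : S ∩ P = range fun n : ℕ => (((2 * n + 1 : ℝ)⁻¹ : ℝ) : ℂ) := spiral_inter_posAxis
  have hne : ∀ n : ℕ, (((2 * n + 1 : ℝ)⁻¹ : ℝ) : ℂ) ≠ 0 := fun n => by
    rw [ofReal_ne_zero]
    positivity
  refine ⟨?_, fun z hz => ?_, fun w hw hwn => ?_⟩
  · rw [hSP]
    exact infinite_range_of_injective
      (ofReal_injective.comp strictAnti_inv_two_mul_add_one.injective)
  · obtain ⟨ε, hε, hball⟩ := Metric.exists_ball_inter_eq_singleton_of_mem_discrete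
      (hSP ▸ tendsto_inv_two_mul_add_one.isDiscrete_range hne) hz
    exact ⟨ε, hε, fun z' hz' hz'z => hball.subset ⟨hz'z, hz'⟩⟩
  · rw [hSP] at hw hwn
    exact (tendsto_inv_two_mul_add_one.closure_range_subset_insert hw).resolve_right hwn
end

section
/- Let T ⊆ (0,1] × [0,1] be closed as a subset of (0,1] × [0,1], with T ∩ ((0,1] × {0}) = ∅, and suppose the closure of T in [0,1] × [0,1] meets [0,1] × {0} in at most the point (0,0). Then there exists a continuous function r : [0,1] → [0,∞) with r⁻¹(0) = {0} such that u > r(t) for every (t,u) ∈ T. -/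
theorem separating_function_below_closed_set
    (T : Set (ℝ × ℝ))
    (hTsub : T ⊆ Set.Ioc 0 1 ×ˢ Set.Icc 0 1)
    (hTclosed : closure T ∩ (Set.Ioc 0 1 ×ˢ Set.Icc 0 1) ⊆ T)
    (hT0 : ∀ t : ℝ, (t, (0:ℝ)) ∉ T)
    (hTacc : closure T ∩ (Set.Icc 0 1 ×ˢ ({0} : Set ℝ)) ⊆ {((0:ℝ), (0:ℝ))}) :
    ∃ r : ℝ → ℝ, ContinuousOn r (Set.Icc 0 1) ∧
      (∀ t ∈ Set.Icc (0:ℝ) 1, 0 ≤ r t) ∧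
      (∀ t ∈ Set.Icc (0:ℝ) 1, (r t = 0 ↔ t = 0)) ∧
      (∀ p ∈ T, r p.1 < p.2) := by
  set S : Set (ℝ × ℝ) := insert ((2:ℝ), (0:ℝ)) (closure T) with hS
  have hSclosed : IsClosed S := by
    rw [hS, Set.insert_eq]; exact isClosed_singleton.union isClosed_closure
  refine ⟨fun t => min t (Metric.infDist (t, 0) S / 2), ?_, ?_, ?_, ?_⟩
  · exact (continuous_id.min (((Metric.continuous_infDist_pt S).comp
      (continuous_id.prodMk continuous_const)).div_const 2)).continuousOn
  · intro t ht
    exact le_min ht.1 (div_nonneg Metric.infDist_nonneg (by norm_num))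
  · intro t ht
    constructor
    · intro h
      by_contra ht0
      have htpos : 0 < t := lt_of_le_of_ne ht.1 (Ne.symm ht0)
      have hd : Metric.infDist (t, 0) S / 2 = 0 := by
        rcases min_eq_iff.mp h with h1 | h1
        · exact absurd h1.1 (ne_of_gt htpos)
        · exact h1.1
      have hd0 : Metric.infDist ((t:ℝ), (0:ℝ)) S = 0 := by linarith
      have hmem : ((t:ℝ), (0:ℝ)) ∈ S := by
        have hne : S.Nonempty := ⟨(2, 0), Set.mem_insert _ _⟩
        have := (Metric.mem_closure_iff_infDist_zero hne).mpr hd0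
        rwa [hSclosed.closure_eq] at this
      rcases hmem with h2 | h2
      · have : t = 2 := congrArg Prod.fst h2
        linarith [ht.2]
      · have : ((t:ℝ), (0:ℝ)) ∈ closure T ∩ (Set.Icc 0 1 ×ˢ ({0} : Set ℝ)) :=
          ⟨h2, ⟨ht, rfl⟩⟩
        have := hTacc this
        simp only [Set.mem_singleton_iff, Prod.mk.injEq] at this
        exact ht0 this.1
    · intro h; subst h
      exact min_eq_left (div_nonneg Metric.infDist_nonneg (by norm_num))
  · rintro ⟨t, u⟩ hp
    have hsub := hTsub hp
    have ht : t ∈ Set.Ioc (0:ℝ) 1 := hsub.1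
    have hu : u ∈ Set.Icc (0:ℝ) 1 := hsub.2
    have hupos : 0 < u := lt_of_le_of_ne hu.1 (by rintro rfl; exact hT0 t hp)
    have hmem : ((t:ℝ), u) ∈ S := Set.mem_insert_of_mem _ (subset_closure hp)
    have hle : Metric.infDist ((t:ℝ), (0:ℝ)) S ≤ u := by
      calc Metric.infDist ((t:ℝ), (0:ℝ)) S ≤ dist ((t:ℝ), (0:ℝ)) ((t:ℝ), u) :=
            Metric.infDist_le_dist_of_mem hmem
        _ = u := by
            rw [Prod.dist_eq]
            simp [Real.dist_eq, abs_of_nonneg hu.1, abs_of_pos hupos, hu.1]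
    exact lt_of_le_of_lt (min_le_right _ _) (by linarith)
end

section
/- Let d_X be the explicit metric on X = (0,1] × ℝ and f(x₁,x₂) = x₁·exp(πi x₂). For b, b' ∈ ℂ with 0 < |b| ≤ 1 and 0 < |b'| ≤ 1, the infimum inf{ d_X(x, x') : x ∈ f⁻¹(b), x' ∈ f⁻¹(b') } tends to |b'|/2 as b → 0 (with b' fixed). -/
open Filter

noncomputable def fmap (x : ℝ × ℝ) : ℂ :=
  (x.1 : ℂ) * Complex.exp (Real.pi * Complex.I * (x.2 : ℂ))

/-!
Once `|b| < |b'| / 2`, any two points of the fibres over `b` and `b'` have first coordinates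
`|b|` and `|b'|`, which are too far apart for the "local" branch of `d_X`; so every such pair is
at distance exactly `|b'| / 2`. The infimum is therefore eventually constant.
-/

lemma norm_fmap {x : ℝ × ℝ} (hx : 0 ≤ x.1) : ‖fmap x‖ = x.1 := by
  simp [fmap, Complex.norm_exp, abs_of_nonneg hx]

lemma fmap_norm_arg_div_pi (b : ℂ) : fmap (‖b‖, Complex.arg b / Real.pi) = b := by
  have hπ : (Real.pi : ℂ) ≠ 0 := by exact_mod_cast Real.pi_ne_zero
  have harg : (Real.pi : ℂ) * Complex.I * ((Complex.arg b / Real.pi : ℝ) : ℂ)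
      = Complex.arg b * Complex.I := by
    push_cast
    field_simp
  simp only [fmap, harg, Complex.norm_mul_exp_arg_mul_I]

lemma dX_eq_half_of_lt_half {x x' : ℝ × ℝ} (hx : 0 ≤ x.1) (h : x.1 < x'.1 / 2) :
    dX x x' = x'.1 / 2 := by
  unfold dX dXaux
  rw [if_neg (by linarith), if_neg (by rintro ⟨h1, -⟩; linarith)]

def fiberDistances (b b' : ℂ) : Set ℝ :=
  {r | ∃ x x' : ℝ × ℝ, memX x ∧ memX x' ∧ fmap x = b ∧ fmap x' = b' ∧ r = dX x x'}

lemma fiberDistances_eq_singleton {b b' : ℂ} (hb0 : 0 < ‖b‖) (hb1 : ‖b‖ ≤ 1)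
    (hb'1 : ‖b'‖ ≤ 1) (hbb' : ‖b‖ < ‖b'‖ / 2) :
    fiberDistances b b' = {‖b'‖ / 2} := by
  have hb'0 : 0 < ‖b'‖ := by linarith
  ext r
  constructor
  · rintro ⟨x, x', hx, hx', rfl, rfl, rfl⟩
    rw [norm_fmap hx.1.le, norm_fmap hx'.1.le] at hbb'
    rw [Set.mem_singleton_iff, dX_eq_half_of_lt_half hx.1.le hbb', norm_fmap hx'.1.le]
  · rintro rfl
    refine ⟨_, _, ⟨hb0, hb1⟩, ⟨hb'0, hb'1⟩, fmap_norm_arg_div_pi b, fmap_norm_arg_div_pi b', ?_⟩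
    rw [dX_eq_half_of_lt_half (norm_nonneg b) hbb']

theorem fiber_distance_tends_to_half_norm
    (b' : ℂ) (hb'0 : 0 < ‖b'‖) (hb'1 : ‖b'‖ ≤ 1) :
    Tendsto
      (fun b : ℂ => sInf {r : ℝ | ∃ x x' : ℝ × ℝ,
        memX x ∧ memX x' ∧ fmap x = b ∧ fmap x' = b' ∧ r = dX x x'})
      (nhdsWithin 0 {b : ℂ | 0 < ‖b‖ ∧ ‖b‖ ≤ 1})
      (nhds (‖b'‖ / 2)) := by
  have hsmall : Metric.ball (0 : ℂ) (‖b'‖ / 2) ∈ nhdsWithin 0 {b : ℂ | 0 < ‖b‖ ∧ ‖b‖ ≤ 1} :=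
    mem_nhdsWithin_of_mem_nhds (Metric.ball_mem_nhds 0 (by positivity))
  refine tendsto_const_nhds.congr' ?_
  filter_upwards [hsmall, self_mem_nhdsWithin] with b hb ⟨hb0, hb1⟩
  rw [mem_ball_zero_iff] at hb
  change ‖b'‖ / 2 = sInf (fiberDistances b b')
  rw [fiberDistances_eq_singleton hb0 hb1 hb'1 hb, csInf_singleton]
end
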